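/- Let p be a prime and let ℤ[1/p] denote the additive group of all rational numbers of the form z/p^m with z ∈ ℤ and m ∈ ℕ. The direct sum of countably infinitely many copies of ℤ[1/p] has no automatic presentation: there do not exist a finite alphabet Σ, a regular language A ⊆ Σ*, and a binary operation on A whose graph is a regular ternary relation, such that the resulting structure is a group isomorphic to ⨁_{n∈ℕ} ℤ[1/p]. -/

import Mathlib

/-- The convolution of an `n`-tuple of words. -/
def conv {α : Type*} {n : ℕ} (w : Fin n → List α) : List (Fin n → Option α) :=
  (List.range (Finset.univ.sup fun i => (w i).length)).map fun k i => (w i)[k]?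

/-- The additive group `ℤ[1/p]` of rationals of the form `z/p^m`, `z ∈ ℤ`, `m ∈ ℕ`. -/
def ZOneOverP (p : ℕ) (hp : p.Prime) : AddSubgroup ℚ where
  carrier := {q : ℚ | ∃ (z : ℤ) (m : ℕ), q = z / p ^ m}
  zero_mem' := ⟨0, 0, by simp⟩
  add_mem' := by
    rintro a b ⟨z₁, m₁, rfl⟩ ⟨z₂, m₂, rfl⟩
    have hp0 : (p : ℚ) ≠ 0 := by exact_mod_cast hp.ne_zero
    refine ⟨z₁ * p ^ m₂ + z₂ * p ^ m₁, m₁ + m₂, ?_⟩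
    push_cast
    rw [pow_add]
    field_simp
  neg_mem' := by
    rintro a ⟨z, m, rfl⟩
    exact ⟨-z, m, by push_cast; ring⟩

/-!
If the graph of addition is a regular relation, then pumping down the tail of `⊗(x, y, x + y)`,
where only the third component is still non-blank, would produce a second, shorter value of
`x + y`; hence `|x + y| ≤ max |x| |y| + N` for a constant `N`. By repeated doubling, the
`2^(t k)` sums `∑ aᵢ δᵢ` with `aᵢ < 2^t` of `k` fixed elements then all have representations
of length `O(t + k)`, and there are only `(|Σ| + 1)^O(t + k)` such words. For `k > N (|Σ| + 1)`
and `t` large this contradicts the independence of the unit vectors `δ₀, …, δ_{k-1}` of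
`⨁ ℤ[1/p]`.
-/

section Conv

variable {α : Type*}

theorem length_conv {n : ℕ} (w : Fin n → List α) :
    (conv w).length = Finset.univ.sup fun i => (w i).length := by
  simp [conv]

theorem getElem?_conv {n : ℕ} (w : Fin n → List α) (k : ℕ) :
    (conv w)[k]? = if k < (conv w).length then some (fun i => (w i)[k]?) else none := by
  split_ifs with hk
  · simp_all [conv]
  · exact List.getElem?_eq_none (not_lt.1 hk)

theorem getElem?_eq_bind_getElem?_conv {n : ℕ} (w : Fin n → List α) (i : Fin n) (k : ℕ) :
    (w i)[k]? = (conv w)[k]?.bind (· i) := by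
  rw [getElem?_conv]
  split_ifs with hk
  · rfl
  · have : (w i).length ≤ (conv w).length :=
      length_conv w ▸ Finset.le_sup (f := fun i => (w i).length) (Finset.mem_univ i)
    exact List.getElem?_eq_none (by omega)

theorem conv_injective {n : ℕ} : Function.Injective (conv (α := α) (n := n)) := fun w w' h =>
  funext fun i => List.ext_getElem? fun k => by
    rw [getElem?_eq_bind_getElem?_conv, h, ← getElem?_eq_bind_getElem?_conv]

theorem length_conv_three (x y z : List α) :
    (conv ![x, y, z]).length = max x.length (max y.length z.length) := by
  simp [length_conv, Fin.univ_succ]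

theorem conv_three_append {x y z₁ : List α} (hx : x.length ≤ z₁.length)
    (hy : y.length ≤ z₁.length) (z₂ : List α) :
    conv ![x, y, z₁ ++ z₂] = conv ![x, y, z₁] ++ z₂.map fun a => ![none, none, some a] := by
  apply List.ext_getElem?
  intro k
  have h₁ : (conv ![x, y, z₁]).length = z₁.length := by rw [length_conv_three]; omega
  have h₁₂ : (conv ![x, y, z₁ ++ z₂]).length = z₁.length + z₂.length := by
    rw [length_conv_three, List.length_append]; omega
  rw [getElem?_conv, h₁₂]
  rcases lt_or_ge k z₁.length with hk | hk
  · rw [if_pos (by omega), List.getElem?_append_left (by omega), getElem?_conv, if_pos (by omega)]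
    congr 1
    funext i
    fin_cases i <;> simp [List.getElem?_append_left hk]
  · rw [List.getElem?_append_right (by omega), h₁, List.getElem?_map]
    split_ifs with hk'
    · rw [List.getElem?_eq_getElem (by omega : k - z₁.length < z₂.length)]
      congr 1
      funext i
      fin_cases i <;> simp [List.getElem?_eq_none (by omega : x.length ≤ k),
        List.getElem?_eq_none (by omega : y.length ≤ k), List.getElem?_append_right hk]
    · rw [List.getElem?_eq_none (by omega : z₂.length ≤ k - z₁.length)]; rfl

end Conv

theorem Language.IsRegular.exists_pump_down_after {α : Type*} {L : Language α}
    (hL : L.IsRegular) :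
    ∃ N : ℕ, ∀ u v : List α, u ++ v ∈ L → N ≤ v.length →
      ∃ a b c, v = a ++ b ++ c ∧ b ≠ [] ∧ u ++ (a ++ c) ∈ L := by
  obtain ⟨σ, _, M, rfl⟩ := hL
  refine ⟨Fintype.card σ, fun u v huv hv => ?_⟩
  obtain ⟨q, a, b, c, rfl, -, hb, ha, hq, hc⟩ := M.evalFrom_split (s := M.eval u) hv rfl
  refine ⟨a, b, c, rfl, hb, ?_⟩
  have hskip : M.evalFrom (M.eval u) (a ++ c) = M.evalFrom (M.eval u) (a ++ b ++ c) := by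
    simp only [DFA.evalFrom_of_append, ha, hq]
  rw [DFA.mem_accepts, DFA.eval, DFA.evalFrom_of_append] at huv ⊢
  exact hskip ▸ huv

def graphLanguage {Γ : Type*} {A : Set (List Γ)} (f : A → A → A) : Language (Fin 3 → Option Γ) :=
  {w | ∃ x y : A, w = conv ![(x : List Γ), (y : List Γ), (f x y : List Γ)]}

theorem exists_length_le_of_isRegular_graphLanguage {Γ : Type*} {A : Set (List Γ)}
    {f : A → A → A} (hf : (graphLanguage f).IsRegular) :
    ∃ N : ℕ, ∀ x y : A,
      (f x y : List Γ).length ≤ max (x : List Γ).length (y : List Γ).length + N := by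
  obtain ⟨N, hN⟩ := hf.exists_pump_down_after
  refine ⟨N, fun x y => ?_⟩
  by_contra! hlong
  set m := max (x : List Γ).length (y : List Γ).length
  set z := (f x y : List Γ)
  set pad : Γ → Fin 3 → Option Γ := fun a => ![none, none, some a]
  have hsplit (w : List Γ) : conv ![(x : List Γ), y, z.take m ++ w] =
      conv ![(x : List Γ), y, z.take m] ++ w.map pad :=
    conv_three_append (by rw [List.length_take]; omega) (by rw [List.length_take]; omega) w
  have hmem : conv ![(x : List Γ), y, z.take m] ++ (z.drop m).map pad ∈ graphLanguage f := by
    rw [← hsplit, List.take_append_drop]; exact ⟨x, y, rfl⟩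
  obtain ⟨a, b, c, habc, hb, hpumped⟩ :=
    hN _ _ hmem (by rw [List.length_map, List.length_drop]; omega)
  obtain ⟨ab', c', hz, hab, rfl⟩ := List.map_eq_append_iff.1 habc
  obtain ⟨a', b', rfl, rfl, rfl⟩ := List.map_eq_append_iff.1 hab
  rw [← List.map_append, ← hsplit] at hpumped
  obtain ⟨x', y', hxy⟩ := hpumped
  have hw := conv_injective hxy
  obtain rfl : x = x' := Subtype.ext (by simpa using congrFun hw 0)
  obtain rfl : y = y' := Subtype.ext (by simpa using congrFun hw 1)
  have hlen := congrArg List.length (congrFun hw 2)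
  have hzlen := congrArg List.length (List.take_append_drop m z)
  rw [hz] at hzlen
  simp only [Matrix.cons_val, List.length_append] at hlen hzlen
  change _ = z.length at hlen
  exact hb (by simp [List.eq_nil_of_length_eq_zero (by omega : b'.length = 0)])

section LengthBound
variable {G : Type*} {ℓ : G → ℕ} {N : ℕ}

theorem apply_nsmul_le_of_le_two_pow [AddMonoid G]
    (hℓ : ∀ g h, ℓ (g + h) ≤ max (ℓ g) (ℓ h) + N) (g : G) (t : ℕ) :
    ∀ a ≤ 2 ^ t, ℓ (a • g) ≤ max (ℓ g) (ℓ 0) + N * t := by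
  induction t with
  | zero =>
    intro a ha
    interval_cases a <;> simp
  | succ t ih =>
    intro a ha
    obtain ⟨b, c, hb, hc, rfl⟩ : ∃ b c, b ≤ 2 ^ t ∧ c ≤ 2 ^ t ∧ a = b + c :=
      ⟨min a (2 ^ t), a - min a (2 ^ t), min_le_right _ _, by rw [pow_succ] at ha; omega, by omega⟩
    calc ℓ ((b + c) • g) ≤ max (ℓ (b • g)) (ℓ (c • g)) + N := add_nsmul g b c ▸ hℓ _ _
      _ ≤ max (ℓ g) (ℓ 0) + N * (t + 1) := by
        rw [mul_add_one, ← add_assoc]; gcongr; exact max_le (ih b hb) (ih c hc)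

theorem apply_sum_le [AddCommMonoid G] (hℓ : ∀ g h, ℓ (g + h) ≤ max (ℓ g) (ℓ h) + N)
    {n : ℕ} (h0 : ℓ 0 ≤ n) : ∀ {k : ℕ} (f : Fin k → G), (∀ i, ℓ (f i) ≤ n) →
      ℓ (∑ i, f i) ≤ n + N * k
  | 0, _, _ => by simpa using h0
  | k + 1, f, hf => by
    rw [Fin.sum_univ_succ]
    calc ℓ (f 0 + ∑ i : Fin k, f i.succ)
        ≤ max (ℓ (f 0)) (ℓ (∑ i : Fin k, f i.succ)) + N := hℓ _ _
      _ ≤ max n (n + N * k) + N := by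
        gcongr; exacts [hf 0, apply_sum_le hℓ h0 _ fun i => hf i.succ]
      _ = n + N * (k + 1) := by rw [max_eq_right (Nat.le_add_right _ _), mul_add_one, add_assoc]

end LengthBound

theorem card_le_of_injective_of_length_le {α Γ : Type*} [Fintype α] [Fintype Γ] {f : α → List Γ}
    (hf : Function.Injective f) {M : ℕ} (hM : ∀ a, (f a).length ≤ M) :
    Fintype.card α ≤ (Fintype.card Γ + 1) ^ M := by
  have hinj : Function.Injective fun a (j : Fin M) => (f a)[(j : ℕ)]? := by
    intro a b hab
    refine hf (List.ext_getElem? fun j => ?_)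
    rcases lt_or_ge j M with hj | hj
    · exact congrFun hab ⟨j, hj⟩
    · rw [List.getElem?_eq_none (by linarith [hM a]), List.getElem?_eq_none (by linarith [hM b])]
  simpa using Fintype.card_le_of_injective _ hinj

theorem exists_pow_add_mul_lt_two_pow_mul {b N k : ℕ} (hb : 0 < b) (hk : N * b < k) (C : ℕ) :
    ∃ t, b ^ (C + N * t) < 2 ^ (t * k) := by
  have hbN : 2 * b ^ N ≤ 2 ^ k := calc
    2 * b ^ N ≤ 2 * (2 ^ b) ^ N := by gcongr; exact Nat.lt_two_pow_self.le
    _ = 2 ^ (N * b + 1) := by rw [← pow_mul, pow_succ, mul_comm b, mul_comm]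
    _ ≤ 2 ^ k := Nat.pow_le_pow_right two_pos hk
  refine ⟨b ^ C, ?_⟩
  calc b ^ (C + N * b ^ C) = b ^ C * (b ^ N) ^ b ^ C := by rw [pow_add, pow_mul]
    _ < 2 ^ b ^ C * (b ^ N) ^ b ^ C := by gcongr; exact Nat.lt_two_pow_self
    _ = (2 * b ^ N) ^ b ^ C := by rw [mul_pow]
    _ ≤ (2 ^ k) ^ b ^ C := by gcongr
    _ = 2 ^ (b ^ C * k) := by rw [← pow_mul, mul_comm]

theorem DirectSum.injective_sum_nsmul_of {ι : Type*} [DecidableEq ι] {β : ι → Type*}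
    [∀ i, AddCommMonoid (β i)] {x : ∀ i, β i} (hx : ∀ i, Function.Injective fun n : ℕ => n • x i)
    {k : ℕ} {v : Fin k → ι} (hv : Function.Injective v) :
    Function.Injective fun a : Fin k → ℕ => ∑ j, a j • DirectSum.of β (v j) (x (v j)) := by
  intro a b hab
  funext j
  have hcoeff (c : Fin k → ℕ) :
      (∑ i, c i • DirectSum.of β (v i) (x (v i))) (v j) = c j • x (v j) := by
    rw [DFinsupp.finsetSum_apply, Fintype.sum_eq_single j fun i hij => by
      rw [DFinsupp.smul_apply, DirectSum.of_eq_of_ne _ _ _ (hv.ne hij.symm), smul_zero]]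
    rw [DFinsupp.smul_apply, DirectSum.of_eq_same]
  exact hx (v j) (by simpa only [hcoeff] using DFunLike.congr_fun hab (v j))

theorem not_injective_sum_nsmul {G Γ : Type*} [AddCommMonoid G] [Fintype Γ] {enc : G → List Γ}
    (henc : Function.Injective enc) {N : ℕ}
    (hN : ∀ g h, (enc (g + h)).length ≤ max (enc g).length (enc h).length + N)
    {k : ℕ} (hk : N * (Fintype.card Γ + 1) < k) (δ : Fin k → G) :
    ¬ Function.Injective fun a : Fin k → ℕ => ∑ i, a i • δ i := by
  intro hδ
  let n := max (Finset.univ.sup fun i => (enc (δ i)).length) (enc 0).length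
  obtain ⟨t, ht⟩ :=
    exists_pow_add_mul_lt_two_pow_mul (b := Fintype.card Γ + 1) (by omega) hk (n + N * k)
  let F : (Fin k → Fin (2 ^ t)) → List Γ := fun a => enc (∑ i, (a i : ℕ) • δ i)
  have hF : Function.Injective F := fun a b hab =>
    funext fun i => Fin.ext (congrFun (hδ (henc hab)) i)
  have hlen (a : Fin k → Fin (2 ^ t)) : (F a).length ≤ n + N * k + N * t := by
    have hterm (i : Fin k) : (enc ((a i : ℕ) • δ i)).length ≤ n + N * t := by
      refine (apply_nsmul_le_of_le_two_pow (ℓ := fun g => (enc g).length) hN _ t _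
        (a i).isLt.le).trans ?_
      gcongr
      exact max_le_max_right _
        (Finset.le_sup (f := fun i => (enc (δ i)).length) (Finset.mem_univ i))
    have := apply_sum_le (ℓ := fun g => (enc g).length) hN (n := n + N * t) (by omega) _ hterm
    simp only [F]; omega
  have := card_le_of_injective_of_length_le hF hlen
  rw [Fintype.card_fun, Fintype.card_fin, Fintype.card_fin, ← pow_mul] at this
  omega

theorem one_mem_ZOneOverP (p : ℕ) (hp : p.Prime) : (1 : ℚ) ∈ ZOneOverP p hp := ⟨1, 0, by simp⟩

theorem injective_nsmul_one_ZOneOverP (p : ℕ) (hp : p.Prime) :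
    Function.Injective fun n : ℕ => n • (⟨1, one_mem_ZOneOverP p hp⟩ : ZOneOverP p hp) :=
  fun m n h => by simpa using congrArg Subtype.val h

/-- The direct sum of countably infinitely many copies of `ℤ[1/p]` has no automatic
presentation. -/
theorem directSum_ZOneOverP_not_automatic (p : ℕ) (hp : p.Prime) :
    ¬ ∃ (Γ : Type) (_ : Fintype Γ) (A : Set (List Γ)) (add : A → A → A)
        (e : DirectSum ℕ (fun _ => ZOneOverP p hp) ≃ A),
        Language.IsRegular (A : Language Γ) ∧
        Language.IsRegular
          {w | ∃ x y : A, w = conv ![(x : List Γ), (y : List Γ), (add x y : List Γ)]} ∧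
        ∀ x y : DirectSum ℕ (fun _ => ZOneOverP p hp),
          e (x + y) = add (e x) (e y) := by
  rintro ⟨Γ, _, A, add, e, -, hgraph, hadd⟩
  obtain ⟨N, hN⟩ := exists_length_le_of_isRegular_graphLanguage hgraph
  refine not_injective_sum_nsmul (enc := fun g => (e g : List Γ)) ?_ ?_
    (Nat.lt_succ_self (N * (Fintype.card Γ + 1)))
    (fun i => DirectSum.of _ (i : ℕ) ⟨1, one_mem_ZOneOverP p hp⟩)
    (DirectSum.injective_sum_nsmul_of (fun _ => injective_nsmul_one_ZOneOverP p hp)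
      Fin.val_injective)
  · exact Subtype.val_injective.comp e.injective
  · intro g h
    simpa only [hadd] using hN (e g) (e h)
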